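/- For natural numbers k, s, i with j ranging over 0 ≤ j ≤ k, and an element B of a commutative ring together with a generalized binomial symbol, one has ∑_{j=0}^{k} binom(M+k,k-j)·binom(i-k,j)·(1-B)^{i-k-j}·(-B)^j = ∑_{s=0}^{i-k} binom(i-k,s)·binom(M+k+s,k)·(-B)^s. -/

import Mathlib

/-! Expanding `binom(M+k+s, k)` by Chu–Vandermonde as `∑_j binom(M+k, k-j) binom(s, j)` and
exchanging the two sums reduces the identity to
`∑_s binom(n, s) binom(s, j) X^s = binom(n, j) X^j (1+X)^(n-j)` at `X = -B`, which follows from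
`binom(n, s) binom(s, j) = binom(n, j) binom(n-j, s-j)` and the binomial theorem. -/

/-- The generalized binomial coefficient `binom(x,k) = x(x-1)⋯(x-k+1)/k!` for an element
`x` of a commutative `ℚ`-algebra. -/
noncomputable def genBinom {S : Type*} [CommRing S] [Algebra ℚ S] (x : S) (k : ℕ) : S :=
  algebraMap ℚ S ((k.factorial : ℚ))⁻¹ * ∏ t ∈ Finset.range k, (x - (t : S))

open Finset Polynomial

theorem descPochhammer_smeval_eq_prod_range {R : Type*} [CommRing R] (n : ℕ) (r : R) :
    (descPochhammer ℤ n).smeval r = ∏ j ∈ range n, (r - j) := by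
  rw [← aeval_eq_smeval, aeval_def, ← eval_map, descPochhammer_map,
    descPochhammer_eval_eq_prod_range]

section genBinom

variable {S : Type*} [CommRing S] [Algebra ℚ S]

theorem genBinom_eq_descPochhammer_smeval (x : S) (k : ℕ) :
    genBinom x k = algebraMap ℚ S (k.factorial : ℚ)⁻¹ * (descPochhammer ℤ k).smeval x := by
  rw [genBinom, descPochhammer_smeval_eq_prod_range]

theorem genBinom_natCast (n k : ℕ) : genBinom (n : S) k = n.choose k := by
  rw [genBinom_eq_descPochhammer_smeval, ← aeval_eq_smeval, aeval_def, ← eval_map,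
    descPochhammer_map, descPochhammer_eval_eq_descFactorial,
    Nat.descFactorial_eq_factorial_mul_choose, Nat.cast_mul, ← mul_assoc,
    ← map_natCast (algebraMap ℚ S) k.factorial, ← map_mul, inv_mul_cancel₀ (by positivity),
    map_one, one_mul]

theorem genBinom_add (x y : S) (k : ℕ) :
    genBinom (x + y) k = ∑ ij ∈ antidiagonal k, genBinom x ij.1 * genBinom y ij.2 := by
  rw [genBinom_eq_descPochhammer_smeval, Ring.descPochhammer_smeval_add k (Commute.all x y),
    mul_sum]
  refine sum_congr rfl fun ⟨i, j⟩ hij => ?_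
  obtain rfl : i + j = k := mem_antidiagonal.mp hij
  have hfact : ((i + j).factorial : ℚ)⁻¹ * (i + j).choose i
      = (i.factorial : ℚ)⁻¹ * (j.factorial : ℚ)⁻¹ := by
    have hchoose : ((i + j).choose j : ℚ) ≠ 0 :=
      mod_cast (Nat.choose_pos (Nat.le_add_left j i)).ne'
    rw [Nat.choose_symm_add, ← Nat.add_choose_mul_factorial_mul_factorial i j]
    push_cast
    field_simp
  rw [genBinom_eq_descPochhammer_smeval, genBinom_eq_descPochhammer_smeval,
    ← map_natCast (algebraMap ℚ S), ← mul_assoc, ← map_mul, hfact, map_mul]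
  ring

end genBinom

theorem sum_range_choose_mul_choose_mul_pow {R : Type*} [CommSemiring R] (x : R) (n j : ℕ) :
    ∑ s ∈ range (n + 1), (n.choose s : R) * s.choose j * x ^ s
      = n.choose j * x ^ j * (1 + x) ^ (n - j) := by
  rcases le_or_gt j n with hjn | hnj
  · have below_j : ∑ s ∈ range j, (n.choose s : R) * s.choose j * x ^ s = 0 :=
      sum_eq_zero fun s hs => by rw [Nat.choose_eq_zero_of_lt (mem_range.mp hs)]; simp
    rw [← sum_range_add_sum_Ico _ (by omega : j ≤ n + 1), below_j, zero_add,
      sum_Ico_eq_sum_range, show n + 1 - j = n - j + 1 by omega, add_comm 1 x, add_pow, mul_sum]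
    refine sum_congr rfl fun t _ => ?_
    have hchoose : n.choose (j + t) * (j + t).choose j = n.choose j * (n - j).choose t := by
      simpa using Nat.choose_mul (n := n) (k := j + t) (s := j) (Nat.le_add_right j t)
    rw [one_pow, mul_one, pow_add, ← Nat.cast_mul, hchoose, Nat.cast_mul]
    ring
  · rw [Nat.choose_eq_zero_of_lt hnj, Nat.cast_zero, zero_mul, zero_mul]
    exact sum_eq_zero fun s hs => by
      rw [Nat.choose_eq_zero_of_lt (show s < j by grind)]; simp

theorem binom_sum_reindex_identity_general {S : Type*} [CommRing S] [Algebra ℚ S]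
    (M B : S) (i k : ℕ) :
    (∑ j ∈ Finset.range (k + 1),
        genBinom (M + (k : S)) (k - j) * ((i - k).choose j : S) *
          (1 - B) ^ (i - k - j) * (-B) ^ j)
      = ∑ s ∈ Finset.range (i - k + 1),
          ((i - k).choose s : S) * genBinom (M + (k : S) + (s : S)) k * (-B) ^ s := by
  have vandermonde (s : ℕ) : genBinom (M + k + s) k
      = ∑ j ∈ range (k + 1), genBinom (M + k) (k - j) * (s.choose j : S) := by
    rw [add_comm (M + k), genBinom_add,
      Nat.sum_antidiagonal_eq_sum_range_succ fun a b => genBinom (s : S) a * genBinom (M + k) b]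
    simp only [genBinom_natCast, mul_comm]
  symm
  calc _ = ∑ s ∈ range (i - k + 1), ∑ j ∈ range (k + 1), genBinom (M + k) (k - j) *
          (((i - k).choose s : S) * s.choose j * (-B) ^ s) := by
        refine sum_congr rfl fun s _ => ?_
        rw [vandermonde, mul_sum, sum_mul]
        exact sum_congr rfl fun j _ => by ring
    _ = ∑ j ∈ range (k + 1), genBinom (M + k) (k - j) *
          ∑ s ∈ range (i - k + 1), ((i - k).choose s : S) * s.choose j * (-B) ^ s := by
        rw [sum_comm]
        simp only [mul_sum]
    _ = _ := by
        refine sum_congr rfl fun j _ => ?_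
        rw [sum_range_choose_mul_choose_mul_pow, ← sub_eq_add_neg]
        ring

/-- For `k ≤ i` and `B`, `M` in a commutative `ℚ`-algebra:
`∑_{j=0}^{k} binom(M+k,k-j)·binom(i-k,j)·(1-B)^{i-k-j}·(-B)^j
  = ∑_{s=0}^{i-k} binom(i-k,s)·binom(M+k+s,k)·(-B)^s`. -/
theorem binom_sum_reindex_identity {S : Type*} [CommRing S] [Algebra ℚ S]
    (M B : S) (i k : ℕ) (hk : k ≤ i) :
    (∑ j ∈ Finset.range (k + 1),
        genBinom (M + (k : S)) (k - j) * ((i - k).choose j : S) *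
          (1 - B) ^ (i - k - j) * (-B) ^ j)
      = ∑ s ∈ Finset.range (i - k + 1),
          ((i - k).choose s : S) * genBinom (M + (k : S) + (s : S)) k * (-B) ^ s :=
  binom_sum_reindex_identity_general M B i k
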